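/- Let A be the adjacency matrix of a finite simple graph on vertex set V and fix O ⊆ V. For every j ∈ O, the j-th entry of Qᵀr satisfies ∑_{I ⊊ O} 1{j∉I} vol(I,{j}) vol(I, V∖I) = 2^{|O|−4} · [ vol(O∖{j}, O∖{j}) · deg_O(j) + 2 vol( V∖(O∖{j}), O∖{j} ) · deg_O(j) + 2 vol( adj_O(j), V∖(O∖{j}) ) ], where adj_O(j) = { i ∈ O : A_{ij} = 1 } and 2^{|O|−4} denotes the real power. -/

import Mathlib

open Finset

variable {V : Type*} [Fintype V] [DecidableEq V]

/-- The adjacency matrix of the graph, real-valued. -/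
noncomputable def adjMat (G : SimpleGraph V) [DecidableRel G.Adj] (i j : V) : ℝ :=
  if G.Adj i j then 1 else 0

/-- `vol(I,J) = ∑_{i∈I} ∑_{j∈J} A_{ij}`. -/
noncomputable def vol (G : SimpleGraph V) [DecidableRel G.Adj] (I J : Finset V) : ℝ :=
  ∑ i ∈ I, ∑ j ∈ J, adjMat G i j

/-- `deg_S(i) = ∑_{s∈S} A_{is}`. -/
noncomputable def degS (G : SimpleGraph V) [DecidableRel G.Adj] (S : Finset V) (i : V) : ℝ :=
  ∑ s ∈ S, adjMat G i s

/-- `vol²_S(i,j) = ∑_{r∈S} A_{ir} A_{rj}`, the number of paths of length 2 from `i` to `j`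
through `S`. -/
noncomputable def vol2 (G : SimpleGraph V) [DecidableRel G.Adj] (S : Finset V) (i j : V) : ℝ :=
  ∑ r ∈ S, adjMat G i r * adjMat G r j

/-! With `S = O.erase j`, the sum runs over the subsets `I ⊆ S`, and for these
`vol(I, Iᶜ) = vol(I, Sᶜ) + vol(I, S ∖ I)`. Both resulting sums are evaluated by counting: an ordered
pair of vertices of `S` lies in `2^{|S|-2}` of its subsets, or `2^{|S|-1}` if the two coincide. For
the second sum, the involution `I ↦ S ∖ I` preserves the cut `vol(I, S ∖ I)` and replaces
`vol(I, {j})` by `vol(S, {j}) - vol(I, {j})`, so that sum is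
`vol(S, {j}) / 2 · ∑_I vol(I, S ∖ I) = 2^{|S|-3} vol(S, {j}) vol(S, S)`. -/

set_option linter.unusedSectionVars false

namespace Finset
variable {α : Type*} [DecidableEq α]

theorem sum_powerset_sum_mem {M : Type*} [AddCommMonoid M] (S : Finset α)
    (F : α → Finset α → M) :
    ∑ I ∈ S.powerset, ∑ i ∈ I, F i I =
      ∑ i ∈ S, ∑ J ∈ (S.erase i).powerset, F i (insert i J) := by
  rw [sum_comm' (t' := S) (s' := fun i => S.powerset.filter (i ∈ ·)) (fun I i => by
    simp only [mem_filter, mem_powerset]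
    exact ⟨fun h => ⟨⟨h.1, h.2⟩, h.1 h.2⟩, fun h => ⟨h.1.1, h.1.2⟩⟩)]
  refine sum_congr rfl fun i hi => ?_
  rw [sum_filter, ← insert_erase hi, sum_powerset_insert (notMem_erase i S), erase_insert_eq_erase,
    erase_idem]
  have hout : ∀ J ∈ (S.erase i).powerset, i ∉ J := fun J hJ h =>
    notMem_erase i S (mem_powerset.1 hJ h)
  rw [sum_ite_of_false hout, sum_ite_of_true fun J _ => mem_insert_self i J, sum_const_zero,
    zero_add]

theorem two_mul_sum_powerset_sum {R : Type*} [CommSemiring R] (S : Finset α)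
    (f : α → R) :
    2 * ∑ I ∈ S.powerset, ∑ i ∈ I, f i = 2 ^ #S * ∑ i ∈ S, f i := by
  rw [sum_powerset_sum_mem S (fun i _ => f i), mul_sum, mul_sum]
  refine sum_congr rfl fun i hi => ?_
  rw [sum_const, card_powerset, nsmul_eq_mul, ← card_erase_add_one hi, pow_succ]
  push_cast
  ring

theorem four_mul_sum_powerset_sum_sum {R : Type*} [CommRing R] (S : Finset α)
    (f : α → α → R) :
    4 * ∑ I ∈ S.powerset, ∑ i ∈ I, ∑ p ∈ I, f i p =
      2 ^ #S * (∑ i ∈ S, ∑ p ∈ S, f i p + ∑ i ∈ S, f i i) := by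
  rw [sum_powerset_sum_mem S (fun i I => ∑ p ∈ I, f i p), mul_sum, ← sum_add_distrib, mul_sum]
  refine sum_congr rfl fun i hi => ?_
  have hinsert : ∀ J ∈ (S.erase i).powerset, ∑ p ∈ insert i J, f i p = f i i + ∑ p ∈ J, f i p :=
    fun J hJ => sum_insert fun h => notMem_erase i S (mem_powerset.1 hJ h)
  have hrow := two_mul_sum_powerset_sum (S.erase i) (f i)
  rw [sum_congr rfl hinsert, sum_add_distrib, sum_const, card_powerset, nsmul_eq_mul,
    ← add_sum_erase S (f i) hi, ← card_erase_add_one hi, pow_succ]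
  push_cast
  linear_combination 2 * hrow

theorem sum_powerset_sdiff {M : Type*} [AddCommMonoid M] (S : Finset α) (f : Finset α → M) :
    ∑ I ∈ S.powerset, f (S \ I) = ∑ I ∈ S.powerset, f I :=
  sum_nbij' (S \ ·) (S \ ·) (fun _ _ => mem_powerset.2 sdiff_subset)
    (fun _ _ => mem_powerset.2 sdiff_subset)
    (fun _ hI => Finset.sdiff_sdiff_eq_self (mem_powerset.1 hI))
    (fun _ hI => Finset.sdiff_sdiff_eq_self (mem_powerset.1 hI)) fun _ _ => rfl

theorem sum_ssubset_boole_notMem_mul {R : Type*} [Semiring R] {O : Finset α} {j : α}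
    (hj : j ∈ O) (f : Finset α → R) :
    ∑ I ∈ O.powerset.filter (fun I => I ⊂ O), (if j ∉ I then (1 : R) else 0) * f I =
      ∑ I ∈ (O.erase j).powerset, f I := by
  simp only [boole_mul]
  rw [← sum_filter, filter_filter]
  refine sum_congr (ext fun I => ?_) fun _ _ => rfl
  simp only [mem_filter, mem_powerset, subset_erase]
  exact ⟨fun h => ⟨h.1, h.2.2⟩,
    fun h => ⟨h.1, ssubset_of_subset_of_ne h.1 (by rintro rfl; exact h.2 hj), h.2⟩⟩

end Finset

section
variable (G : SimpleGraph V) [DecidableRel G.Adj]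

theorem adjMat_comm (i j : V) : adjMat G i j = adjMat G j i := by
  simp only [adjMat, G.adj_comm]

theorem adjMat_self (i : V) : adjMat G i i = 0 := by
  simp [adjMat]

theorem vol_eq_sum_degS (I J : Finset V) : vol G I J = ∑ i ∈ I, degS G J i := rfl

theorem vol_comm (I J : Finset V) : vol G I J = vol G J I := by
  rw [vol, sum_comm]
  exact sum_congr rfl fun _ _ => sum_congr rfl fun _ _ => adjMat_comm G _ _

theorem vol_union_right {J K : Finset V} (h : Disjoint J K) (I : Finset V) :
    vol G I (J ∪ K) = vol G I J + vol G I K := by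
  simp only [vol, sum_union h, sum_add_distrib]

theorem vol_sdiff_right {J K : Finset V} (h : J ⊆ K) (I : Finset V) :
    vol G I (K \ J) = vol G I K - vol G I J := by
  rw [eq_sub_iff_add_eq, ← vol_union_right G sdiff_disjoint, sdiff_union_of_subset h]

theorem vol_sdiff_left {I S : Finset V} (h : I ⊆ S) (J : Finset V) :
    vol G (S \ I) J = vol G S J - vol G I J := by
  rw [vol_comm, vol_sdiff_right G h, vol_comm G J, vol_comm G J]

theorem vol_compl_of_subset {I S : Finset V} (h : I ⊆ S) :
    vol G I Iᶜ = vol G I Sᶜ + vol G I (S \ I) := by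
  have hsplit : Iᶜ = Sᶜ ∪ (S \ I) := by
    ext x
    simp only [mem_compl, mem_union, mem_sdiff]
    have := @h x
    tauto
  rw [hsplit, vol_union_right G (disjoint_compl_left.mono_right sdiff_subset)]

theorem degS_eq_vol_erase (O : Finset V) (j : V) :
    degS G O j = vol G (O.erase j) {j} := by
  rw [degS, ← sum_erase O (adjMat_self G j), vol_eq_sum_degS]
  exact sum_congr rfl fun s _ => by rw [degS, sum_singleton, adjMat_comm]

theorem degS_singleton (i j : V) : degS G {j} i = adjMat G i j := sum_singleton _ _

theorem vol_filter_adj (O T : Finset V) (j : V) :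
    vol G (O.filter fun i => G.Adj i j) T = ∑ i ∈ O.erase j, adjMat G i j * degS G T i := by
  rw [vol_eq_sum_degS, sum_filter, ← sum_erase O (a := j) (by simp)]
  exact sum_congr rfl fun i _ => by rw [adjMat, ite_mul, one_mul, zero_mul]

theorem four_mul_sum_powerset_vol_mul_vol (S T U : Finset V) :
    4 * ∑ I ∈ S.powerset, vol G I T * vol G I U =
      2 ^ #S * (vol G S T * vol G S U + ∑ i ∈ S, degS G T i * degS G U i) := by
  simp only [vol_eq_sum_degS, sum_mul_sum]
  exact four_mul_sum_powerset_sum_sum S fun i p => degS G T i * degS G U p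

theorem four_mul_sum_powerset_vol_sdiff (S : Finset V) :
    4 * ∑ I ∈ S.powerset, vol G I (S \ I) = 2 ^ #S * vol G S S := by
  have hcut : ∀ I ∈ S.powerset, vol G I (S \ I) = vol G I S - vol G I I := fun I hI =>
    vol_sdiff_right G (mem_powerset.1 hI) I
  have hS : 2 * ∑ I ∈ S.powerset, vol G I S = 2 ^ #S * vol G S S :=
    two_mul_sum_powerset_sum S (degS G S)
  have hI : 4 * ∑ I ∈ S.powerset, vol G I I = 2 ^ #S * vol G S S := by
    have h := four_mul_sum_powerset_sum_sum S (adjMat G)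
    simp only [adjMat_self, sum_const_zero, add_zero] at h
    exact h
  rw [sum_congr rfl hcut, sum_sub_distrib]
  linear_combination 2 * hS - hI

theorem two_mul_sum_powerset_vol_mul_vol_sdiff (S T : Finset V) :
    2 * ∑ I ∈ S.powerset, vol G I T * vol G I (S \ I) =
      vol G S T * ∑ I ∈ S.powerset, vol G I (S \ I) := by
  have hflip : ∑ I ∈ S.powerset, vol G I T * vol G I (S \ I) =
      ∑ I ∈ S.powerset, vol G (S \ I) T * vol G I (S \ I) := by
    rw [← sum_powerset_sdiff S]
    refine sum_congr rfl fun I hI => ?_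
    rw [Finset.sdiff_sdiff_eq_self (mem_powerset.1 hI), vol_comm G I]
  rw [two_mul, mul_sum]
  nth_rewrite 2 [hflip]
  rw [← sum_add_distrib]
  refine sum_congr rfl fun I hI => ?_
  rw [vol_sdiff_left G (mem_powerset.1 hI)]
  ring

end

/-- Entries of `Qᵀr`:
`∑_{I ⊊ O} 1{j∉I} vol(I,{j}) vol(I,V∖I) = 2^{|O|−4} [vol(O∖{j},O∖{j}) deg_O(j)
  + 2 vol(V∖(O∖{j}), O∖{j}) deg_O(j) + 2 vol(adj_O(j), V∖(O∖{j}))]`. -/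
theorem Qtr_entry (G : SimpleGraph V) [DecidableRel G.Adj] (O : Finset V)
    (j : V) (hj : j ∈ O) :
    ∑ I ∈ O.powerset.filter (fun I => I ⊂ O),
        (if j ∉ I then (1 : ℝ) else 0) * vol G I {j} * vol G I Iᶜ =
      (2 : ℝ) ^ ((O.card : ℤ) - 4) *
        (vol G (O.erase j) (O.erase j) * degS G O j
          + 2 * vol G (O.erase j)ᶜ (O.erase j) * degS G O j
          + 2 * vol G (O.filter fun i => G.Adj i j) (O.erase j)ᶜ) := by
  set S := O.erase j
  have hsplit : ∀ I ∈ S.powerset, vol G I {j} * vol G I Iᶜ =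
      vol G I {j} * vol G I Sᶜ + vol G I {j} * vol G I (S \ I) := fun I hI => by
    rw [vol_compl_of_subset G (mem_powerset.1 hI), mul_add]
  simp only [mul_assoc]
  rw [sum_ssubset_boole_notMem_mul hj, sum_congr rfl hsplit, sum_add_distrib,
    degS_eq_vol_erase, vol_filter_adj, vol_comm G Sᶜ]
  have h1 := four_mul_sum_powerset_vol_mul_vol G S {j} Sᶜ
  simp only [degS_singleton] at h1
  have h2 := two_mul_sum_powerset_vol_mul_vol_sdiff G S {j}
  have h3 := four_mul_sum_powerset_vol_sdiff G S
  have hpow : (2 : ℝ) ^ ((#O : ℤ) - 4) * 8 = 2 ^ #S := by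
    rw [← card_erase_add_one hj, Nat.cast_succ, show (#S : ℤ) + 1 - 4 = #S - 3 by ring,
      zpow_sub₀ two_ne_zero, zpow_natCast]
    norm_num
  set d := vol G S {j}
  linear_combination h1 / 4 + h2 / 2 + d / 8 * h3 -
    ((d * vol G S Sᶜ + ∑ i ∈ S, adjMat G i j * degS G Sᶜ i) / 4 + d * vol G S S / 8) * hpow
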